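/- Pruning correctness with individualized thresholds: if UB(t) < PMIU(t) for a sequence t, then neither t nor any super-sequence t' of t is a high-utility sequential pattern, i.e., u(t) < MIU(t) and u(t') < MIU(t') for all t' ⊇ t. -/
import Mathlib

/-- pruning correctness with individualized thresholds.
If UB(t) < PMIU(t) then neither t nor any of its super-sequences is a HUSP. -/
theorem pruning_correctness {P I : Type*} [DecidableEq I] [LinearOrder I]
    (mu : I → ℝ) (items Irest : P → Finset I)
    (hitems : ∀ p, (items p).Nonempty)
    (u UB : P → ℝ)
    (ext : P → P → Prop)  -- t' is a super-sequence (extension) of t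
    (hub : ∀ p, u p ≤ UB p)
    (hanti : ∀ p p', ext p p' → UB p' ≤ UB p)
    (hitemsSub : ∀ p p', ext p p' → items p' ⊆ items p ∪ Irest p)
    (hrestSub : ∀ p p', ext p p' → Irest p' ⊆ Irest p)
    (t : P)
    (hprune : UB t < (items t ∪ Irest t).inf' (by
        obtain ⟨i, hi⟩ := hitems t
        exact ⟨i, Finset.mem_union_left _ hi⟩) mu) :
    u t < (items t).inf' (hitems t) mu ∧
      ∀ t', ext t t' → u t' < (items t').inf' (hitems t') mu := by
  have hne : (items t ∪ Irest t).Nonempty := by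
    obtain ⟨i, hi⟩ := hitems t
    exact ⟨i, Finset.mem_union_left _ hi⟩
  have key : ∀ (s : Finset I) (hs : s.Nonempty), s ⊆ items t ∪ Irest t →
      (items t ∪ Irest t).inf' hne mu ≤ s.inf' hs mu := by
    intro s hs hsub
    apply Finset.le_inf'
    intro b hb
    exact Finset.inf'_le _ (hsub hb)
  constructor
  · exact lt_of_le_of_lt (hub t) (lt_of_lt_of_le hprune
      (key _ (hitems t) (Finset.subset_union_left)))
  · intro t' hext
    exact lt_of_le_of_lt (le_trans (hub t') (hanti t t' hext))
      (lt_of_lt_of_le hprune (key _ (hitems t') (hitemsSub t t' hext)))
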